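/- Let L = V ⊕ W be a color gLt-algebra admitting a quasi-multiplicative basis {e_i}_{i∈I} of W ≠ 0. If L is simple (its only color gLt-ideals are 0 and L), then any two elements of the index set I are connected, i.e. the connection equivalence relation on I has exactly one class. -/

import Mathlib

set_option maxHeartbeats 1000000

/-- A (color) generalized Lie-type algebra: an `(n+2)`-ary `G`-graded algebra with
bicharacter `epsilon` satisfying the (colored) generalized Lie-type identities with
structure constants `alpha` (allowed to depend on the degrees of the arguments). -/
structure ColorGLT (F : Type) [Field F] (G : Type) [AddCommGroup G] [DecidableEq G]
    (L : Type) [AddCommGroup L] [Module F L] (n : ℕ) where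
  bracket : MultilinearMap F (fun _ : Fin (n + 2) => L) L
  grading : G → Submodule F L
  isInternal : DirectSum.IsInternal grading
  bracket_graded : ∀ (g : Fin (n + 2) → G) (x : Fin (n + 2) → L),
    (∀ t, x t ∈ grading (g t)) → bracket x ∈ grading (∑ t, g t)
  epsilon : G → G → F
  epsilon_ne_zero : ∀ g h, epsilon g h ≠ 0
  epsilon_add_left : ∀ g h k, epsilon (g + h) k = epsilon g k * epsilon h k
  epsilon_add_right : ∀ g h k, epsilon k (g + h) = epsilon k g * epsilon k h
  epsilon_skew : ∀ g h, epsilon g h * epsilon h g = 1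
  alpha : Fin (n + 2) → Fin (n + 2) → Fin (n + 2) → Equiv.Perm (Fin (n + 2)) →
      Equiv.Perm (Fin (n + 1)) → (Fin (n + 2) → G) → (Fin (n + 1) → G) → F
  glt : ∀ (k : Fin (n + 2)) (gx : Fin (n + 2) → G) (gy : Fin (n + 1) → G)
      (x : Fin (n + 2) → L) (y : Fin (n + 1) → L),
      (∀ t, x t ∈ grading (gx t)) → (∀ t, y t ∈ grading (gy t)) →
      bracket (Fin.insertNth k (bracket x) y) =
        ∑ i : Fin (n + 2), ∑ j : Fin (n + 2), ∑ σ₁ : Equiv.Perm (Fin (n + 2)),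
          ∑ σ₂ : Equiv.Perm (Fin (n + 1)),
            alpha i j k σ₁ σ₂ gx gy •
              bracket (Function.update (fun t => x (σ₁ t)) i
                (bracket (Fin.insertNth j (x (σ₁ i)) (fun t => y (σ₂ t)))))

namespace ColorGLT

variable {F : Type} [Field F] {G : Type} [AddCommGroup G] [DecidableEq G]
    {L : Type} [AddCommGroup L] [Module F L] {n : ℕ}

/-- A color gLt-ideal: a graded subspace `S` with `⟨S, L, …, L⟩_σ ⊆ S` for all `σ ∈ Sₙ`. -/
def IsIdeal (A : ColorGLT F G L n) (S : Submodule F L) : Prop :=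
  (S = ⨆ g : G, S ⊓ A.grading g) ∧
  ∀ (σ : Equiv.Perm (Fin (n + 2))) (x : Fin (n + 2) → L),
    x 0 ∈ S → A.bracket (fun t => x (σ t)) ∈ S

/-- `L` is centerless: `Z(L) = {x : ⟨x, L, …, L⟩_σ = 0 ∀ σ} = 0`. -/
def Centerless (A : ColorGLT F G L n) : Prop :=
  ∀ x : L, (∀ (σ : Equiv.Perm (Fin (n + 2))) (y : Fin (n + 2) → L),
    y 0 = x → A.bracket (fun t => y (σ t)) = 0) → x = 0

end ColorGLT

/-- A quasi-multiplicative basis of a color gLt-algebra: `L = V ⊕ W`, with a homogeneous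
basis `{e i}` of `W ≠ 0` satisfying the three quasi-multiplicativity conditions. -/
structure QMBasis {F : Type} [Field F] {G : Type} [AddCommGroup G] [DecidableEq G]
    {L : Type} [AddCommGroup L] [Module F L] {n : ℕ}
    (A : ColorGLT F G L n) (I : Type) where
  V : Submodule F L
  W : Submodule F L
  compl : IsCompl V W
  W_ne_bot : W ≠ ⊥
  V_graded : V = ⨆ g : G, V ⊓ A.grading g
  W_graded : W = ⨆ g : G, W ⊓ A.grading g
  e : I → L
  deg : I → G
  e_homog : ∀ i, e i ∈ A.grading (deg i)
  e_indep : LinearIndependent F e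
  e_span : Submodule.span F (Set.range e) = W
  qm1 : ∀ c : Fin (n + 2) → I,
    (∃ j, A.bracket (fun t => e (c t)) ∈ Submodule.span F {e j}) ∨
      A.bracket (fun t => e (c t)) ∈ V
  qm2 : ∀ (σ : Equiv.Perm (Fin (n + 2))) (S : Finset (Fin (n + 2))),
    S.Nonempty → S ≠ Finset.univ → ∀ ind : Fin (n + 2) → I, ∃ j : I,
      ∀ x : Fin (n + 2) → L, (∀ t, t ∈ S → x t = e (ind t)) →
        (∀ t, t ∉ S → x t ∈ V) →
        A.bracket (fun t => x (σ t)) ∈ Submodule.span F {e j}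
  qm3 : (∃ j, ∀ x : Fin (n + 2) → L, (∀ t, x t ∈ V) →
          A.bracket x ∈ Submodule.span F {e j}) ∨
        (∀ x : Fin (n + 2) → L, (∀ t, x t ∈ V) → A.bracket x ∈ V)

namespace QMBasis

variable {F : Type} [Field F] {G : Type} [AddCommGroup G] [DecidableEq G]
    {L : Type} [AddCommGroup L] [Module F L] {n : ℕ} {I : Type}
    {A : ColorGLT F G L n}

/-- The set of elements represented by an index of `𝔉 = I ∪ {v}`: `e i` for `some i`,
the subspace `V` for `none` (= `v`). -/
def elemSet (B : QMBasis A I) : Option I → Set L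
  | none => (B.V : Set L)
  | some i => {B.e i}

/-- The target set of an index of `𝔉`: the line `𝔽 e j` for `some j`, `V` for `v`. -/
def targetSet (B : QMBasis A I) : Option I → Set L
  | none => (B.V : Set L)
  | some j => (Submodule.span F {B.e j} : Set L)

/-- `x ∈ a_σ(c)`: the `σ`-permuted product of the elements represented by `c` is nonzero
and lands in the target represented by `x`; the value `v` is only allowed for all-basis
or all-`V` tuples. -/
def aMem (B : QMBasis A I) (σ : Equiv.Perm (Fin (n + 2)))
    (c : Fin (n + 2) → Option I) (x : Option I) : Prop :=
  (∃ z : Fin (n + 2) → L, (∀ t, z t ∈ B.elemSet (c (σ t))) ∧ A.bracket z ≠ 0) ∧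
  (∀ z : Fin (n + 2) → L, (∀ t, z t ∈ B.elemSet (c (σ t))) → A.bracket z ∈ B.targetSet x) ∧
  (x = none → ((∀ t, (c t).isSome = true) ∨ (∀ t, c t = none)))

/-- An admissible `(n+1)`-tuple over `𝔉 ∪ 𝔉̄`: all entries barred (`true`) or all
unbarred (`false`). -/
abbrev Tup (I : Type) (n : ℕ) := Bool × (Fin (n + 1) → Option I)

/-- `x ∈ μ(j, X)` where `j ∈ 𝔉 ∪ 𝔉̄` (left = unbarred, right = barred) and `X` is an
admissible tuple; defined via `a_σ` and `b_σ` as in the paper. -/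
def muMem (B : QMBasis A I) :
    Option I ⊕ Option I → Tup I n → Option I → Prop
  | Sum.inl j, (false, c), x => ∃ σ : Equiv.Perm (Fin (n + 2)), B.aMem σ (Fin.cons j c) x
  | Sum.inl j, (true, c), x => ∃ σ : Equiv.Perm (Fin (n + 2)), B.aMem σ (Fin.cons x c) j
  | Sum.inr j, (false, c), x =>
      ∃ (k : Fin (n + 1)) (σ : Equiv.Perm (Fin (n + 2))),
        B.aMem σ (Fin.cons x (Fin.cons j (fun t => c (k.succAbove t)))) (c k)
  | Sum.inr _, (true, _), _ => False

/-- The map `φ : P(I ∪ Ī) × T → P(I ∪ Ī)`, `φ(J, X) = K ∪ K̄` with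
`K = (⋃_{j ∈ J} μ(j, X)) \ {v}` (left = `I`, right = `Ī`). -/
def phi (B : QMBasis A I) (J : Set (I ⊕ I)) (X : Tup I n) : Set (I ⊕ I) :=
  {p | ∃ i : I, (p = Sum.inl i ∨ p = Sum.inr i) ∧
    ∃ j ∈ J, B.muMem (Sum.map some some j) X (some i)}

/-- Iterated application of `φ` along a list of tuples. -/
def chain (B : QMBasis A I) : Set (I ⊕ I) → List (Tup I n) → Set (I ⊕ I)
  | s, [] => s
  | s, X :: r => chain B (B.phi s X) r

/-- The connection relation: `i` is connected to `j`. -/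
def Connected (B : QMBasis A I) (i j : I) : Prop :=
  i = j ∨ ∃ (Xs : List (Tup I n)) (st : I ⊕ I),
    Xs ≠ [] ∧ (st = Sum.inl i ∨ st = Sum.inr i) ∧
    (∀ m, m < Xs.length → (chain B {st} (List.take m Xs)).Nonempty) ∧
    Sum.inl j ∈ chain B {st} Xs

/-- The connection class `[i]` of `i`. -/
def cls (B : QMBasis A I) (i : I) : Set I := {j | B.Connected i j}

/-- `W_{[i]} = ⊕_{j ∈ [i]} 𝔽 e_j`. -/
def Wcls (B : QMBasis A I) (i : I) : Submodule F L :=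
  Submodule.span F (B.e '' B.cls i)

/-- `V_{[i]} = (Σ_{i₁,…,iₙ ∈ [i]} 𝔽⟨e_{i₁},…,e_{iₙ}⟩) ∩ V`. -/
def Vcls (B : QMBasis A I) (i : I) : Submodule F L :=
  Submodule.span F {z : L | ∃ c : Fin (n + 2) → I,
    (∀ t, c t ∈ B.cls i) ∧ z = A.bracket (fun t => B.e (c t))} ⊓ B.V

/-- `𝔍_{[i]} = V_{[i]} ⊕ W_{[i]}`. -/
def Jcls (B : QMBasis A I) (i : I) : Submodule F L := B.Vcls i ⊔ B.Wcls i

/-- `S` admits a quasi-multiplicative basis inherited from that of `L`: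
`S = V_S ⊕ W_S` with `V_S ⊆ V` and `W_S ≠ 0` spanned by a subset of the `e i`. -/
def HasInheritedBasis (B : QMBasis A I) (S : Submodule F L) : Prop :=
  ∃ (V' : Submodule F L) (J' : Set I), V' ≤ B.V ∧ J'.Nonempty ∧
    S = V' ⊔ Submodule.span F (B.e '' J')

/-- `V` is tight: `V = 0` or `V = Σ_{μ(i₁,…,iₙ) = {v}} 𝔽⟨e_{i₁},…,e_{iₙ}⟩`. -/
def Tight (B : QMBasis A I) : Prop :=
  B.V = ⊥ ∨
    B.V = Submodule.span F {z : L | ∃ c : Fin (n + 2) → I,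
      ({x : Option I | ∃ σ, B.aMem σ (fun t => some (c t)) x} = {none}) ∧
      z = A.bracket (fun t => B.e (c t))}

/-- The set of elements represented by `u_{k}`: `u_k = e_k + e_{k̄}` (`= e` of the
underlying index, since `e_{j̄} = 0`) if `k ∉ {v, v̄}`, and `u_k = V` otherwise. -/
def uSet (B : QMBasis A I) : Option I ⊕ Option I → Set L
  | Sum.inl none => (B.V : Set L)
  | Sum.inr none => (B.V : Set L)
  | Sum.inl (some i) => {B.e i}
  | Sum.inr (some i) => {B.e i}

/-- The full `(n+2)`-tuple `(k₁, …, kₙ)` over `𝔉 ∪ 𝔉̄` obtained from a first entry and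
an admissible tuple. -/
def fullTup {I : Type} {n : ℕ} (k₁ : Option I ⊕ Option I) (X : Tup I n) :
    Fin (n + 2) → Option I ⊕ Option I :=
  Fin.cons k₁ (fun t => if X.1 then Sum.inr (X.2 t) else Sum.inl (X.2 t))

/-- The basis is `μ`-quasi-multiplicative: whenever `i ∈ μ(k₁, …, kₙ)` then
`e i ∈ 𝔽⟨u_{k₁}, …, u_{kₙ}⟩_σ` for some `σ ∈ Sₙ`. -/
def MuQM (B : QMBasis A I) : Prop :=
  ∀ (k₁ : Option I ⊕ Option I) (X : Tup I n) (i : I),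
    B.muMem k₁ X (some i) →
    ∃ (σ : Equiv.Perm (Fin (n + 2))) (z : Fin (n + 2) → L),
      (∀ t, z t ∈ B.uSet (fullTup k₁ X (σ t))) ∧
      B.e i ∈ Submodule.span F {A.bracket z}

end QMBasis

/-! For `i ∈ I`, the products of basis vectors indexed in `[i]` that lie in `V`, together with
the `e_j`, `j ∈ [i]`, span `𝔍_{[i]}`, and this span absorbs products. Indeed, by
quasi-multiplicativity a nonzero product with a factor `e_m`, `m ∈ [i]`, lies either in a line
`𝔽 e_p`, and then one `φ`-step from `m` reaches `p`, or in `V`, and then one step from `m̄`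
reaches every index of the product. A product with a factor in `V ∩ 𝔍_{[i]}` is expanded by the
gLt identity into products of that first kind. So `𝔍_{[i]}` is a graded ideal containing
`e_i ≠ 0`; by simplicity it is `L`, and `e_j ∈ V ⊕ W_{[i]}` forces `j ∈ [i]`. -/

open Function Submodule

theorem MultilinearMap.map_mem_of_forall_mem_span {R ι N : Type*} {M : ι → Type*}
    [CommSemiring R] [∀ i, AddCommMonoid (M i)] [∀ i, Module R (M i)] [AddCommMonoid N]
    [Module R N] [Finite ι] (f : MultilinearMap R M N) {S : ∀ i, Set (M i)}
    {T : Submodule R N} (hf : ∀ z : ∀ i, M i, (∀ i, z i ∈ S i) → f z ∈ T)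
    {z : ∀ i, M i} (hz : ∀ i, z i ∈ span R (S i)) : f z ∈ T := by
  classical
  have := Fintype.ofFinite ι
  suffices key : ∀ s : Finset ι, ∀ z : ∀ i, M i,
      (∀ i ∈ s, z i ∈ span R (S i)) → (∀ i ∉ s, z i ∈ S i) → f z ∈ T from
    key Finset.univ z (fun i _ => hz i) (by simp)
  intro s
  induction s using Finset.induction_on with
  | empty => exact fun z _ hS => hf z fun i => hS i (Finset.notMem_empty i)
  | insert a s ha ih =>
    intro z hspan hS
    suffices ∀ x ∈ span R (S a), f (update z a x) ∈ T by
      simpa using this (z a) (hspan a (Finset.mem_insert_self a s))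
    intro x hx
    induction hx using Submodule.span_induction with
    | mem x hx =>
      refine ih _ (fun i hi => ?_) (fun i hi => ?_)
      · rw [update_of_ne (ne_of_mem_of_not_mem hi ha)]
        exact hspan i (Finset.mem_insert_of_mem hi)
      · rcases eq_or_ne i a with rfl | hia
        · simpa using hx
        · rw [update_of_ne hia]
          exact hS i (by simp [hia, hi])
    | zero => rw [f.map_update_zero]; exact T.zero_mem
    | add x y _ _ hx hy => rw [f.map_update_add]; exact T.add_mem hx hy
    | smul c x _ hx => rw [f.map_update_smul]; exact T.smul_mem c hx

theorem Submodule.span_eq_iSup_inf_of_forall_exists_mem {R M G : Type*} [Semiring R]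
    [AddCommMonoid M] [Module R M] (𝒜 : G → Submodule R M) {s : Set M}
    (hs : ∀ x ∈ s, ∃ g, x ∈ 𝒜 g) : span R s = ⨆ g, span R s ⊓ 𝒜 g := by
  refine le_antisymm (span_le.mpr fun x hx => ?_) (iSup_le fun _ => inf_le_left)
  obtain ⟨g, hg⟩ := hs x hx
  exact le_iSup (fun g => span R s ⊓ 𝒜 g) g ⟨subset_span hx, hg⟩

theorem Fin.exists_perm_apply_zero_apply_one {n : ℕ} {a b : Fin (n + 2)} (h : a ≠ b) :
    ∃ ρ : Equiv.Perm (Fin (n + 2)), ρ 0 = a ∧ ρ 1 = b := by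
  refine ⟨Equiv.swap 0 a * Equiv.swap 1 (Equiv.swap 0 a b), ?_, by simp⟩
  have h0 : Equiv.swap 0 a b ≠ 0 := fun h' => h <| by
    rw [Equiv.swap_apply_eq_iff, Equiv.swap_apply_left] at h'
    exact h'.symm
  simp [Equiv.swap_apply_of_ne_of_ne Fin.zero_ne_one h0.symm]

namespace QMBasis

variable {F : Type} [Field F] {G : Type} [AddCommGroup G] [DecidableEq G]
    {L : Type} [AddCommGroup L] [Module F L] {n : ℕ} {I : Type}
    {A : ColorGLT F G L n} (B : QMBasis A I)

theorem chain_append_singleton (s : Set (I ⊕ I)) (Xs : List (Tup I n)) (X : Tup I n) :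
    B.chain s (Xs ++ [X]) = B.phi (B.chain s Xs) X := by
  induction Xs generalizing s with
  | nil => rfl
  | cons Y Xs ih => exact ih (B.phi s Y)

theorem inl_mem_phi_iff {J : Set (I ⊕ I)} {X : Tup I n} {a : I} :
    Sum.inl a ∈ B.phi J X ↔ ∃ j ∈ J, B.muMem (Sum.map some some j) X (some a) := by
  simp [phi]

theorem inr_mem_phi_iff {J : Set (I ⊕ I)} {X : Tup I n} {a : I} :
    Sum.inr a ∈ B.phi J X ↔ ∃ j ∈ J, B.muMem (Sum.map some some j) X (some a) := by
  simp [phi]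

theorem inr_mem_chain_of_inl_mem {s : Set (I ⊕ I)} {Xs : List (Tup I n)} (hXs : Xs ≠ [])
    {a : I} (ha : Sum.inl a ∈ B.chain s Xs) : Sum.inr a ∈ B.chain s Xs := by
  obtain ⟨Ys, X, rfl⟩ := (List.eq_nil_or_concat' Xs).resolve_left hXs
  rw [chain_append_singleton] at ha ⊢
  exact B.inr_mem_phi_iff.mpr (B.inl_mem_phi_iff.mp ha)

theorem connected_of_mem_chain {i p : I} {Xs : List (Tup I n)} {st : I ⊕ I}
    (hst : st = Sum.inl i ∨ st = Sum.inr i)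
    (hpre : ∀ k < Xs.length, (B.chain {st} (Xs.take k)).Nonempty)
    {q : I ⊕ I} (hq : q ∈ B.chain {st} Xs) (X : Tup I n)
    (hμ : B.muMem (Sum.map some some q) X (some p)) : B.Connected i p := by
  refine Or.inr ⟨Xs ++ [X], st, by simp, hst, fun k hk => ?_, ?_⟩
  · rw [List.length_append, List.length_singleton] at hk
    rcases Nat.lt_succ_iff_lt_or_eq.mp hk with hk | rfl
    · rw [List.take_append_of_le_length hk.le]
      exact hpre k hk
    · rw [List.take_left' rfl]
      exact ⟨q, hq⟩
  · rw [chain_append_singleton]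
    exact B.inl_mem_phi_iff.mpr ⟨q, hq, hμ⟩

theorem connected_of_muMem {i m p : I} (hm : B.Connected i m) {q : I ⊕ I}
    (hq : q = Sum.inl m ∨ q = Sum.inr m) (X : Tup I n)
    (hμ : B.muMem (Sum.map some some q) X (some p)) : B.Connected i p := by
  rcases hm with rfl | ⟨Xs, st, hne, hst, hpre, hmem⟩
  · exact B.connected_of_mem_chain (Xs := []) hq (by simp) rfl X hμ
  · refine B.connected_of_mem_chain hst hpre ?_ X hμ
    rcases hq with rfl | rfl
    exacts [hmem, B.inr_mem_chain_of_inl_mem hne hmem]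

theorem aMem_comp_symm (ρ : Equiv.Perm (Fin (n + 2))) {ct : Fin (n + 2) → Option I}
    {x : Option I}
    (hne : ∃ z : Fin (n + 2) → L, (∀ t, z t ∈ B.elemSet (ct t)) ∧ A.bracket z ≠ 0)
    (hmem : ∀ z : Fin (n + 2) → L, (∀ t, z t ∈ B.elemSet (ct t)) →
      A.bracket z ∈ B.targetSet x)
    (hv : x = none → (∀ t, (ct t).isSome) ∨ ∀ t, ct t = none) :
    B.aMem ρ.symm (ct ∘ ρ) x := by
  simp only [aMem, comp_apply, Equiv.apply_symm_apply]
  exact ⟨hne, hmem, fun h => (hv h).imp (fun h t => h _) (fun h t => h _)⟩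

theorem connected_of_bracket_mem_span {i m p : I} {ct : Fin (n + 2) → Option I}
    {s : Fin (n + 2)} (hs : ct s = some m) (hm : B.Connected i m)
    (hne : ∃ z : Fin (n + 2) → L, (∀ t, z t ∈ B.elemSet (ct t)) ∧ A.bracket z ≠ 0)
    (hmem : ∀ z : Fin (n + 2) → L, (∀ t, z t ∈ B.elemSet (ct t)) →
      A.bracket z ∈ span F {B.e p}) :
    B.Connected i p := by
  set ρ := Equiv.swap 0 s
  have h0 : (ct ∘ ρ) 0 = some m := by simp [ρ, hs]
  refine B.connected_of_muMem hm (q := Sum.inl m) (Or.inl rfl) (false, Fin.tail (ct ∘ ρ))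
    ⟨ρ.symm, ?_⟩
  rw [← h0, Fin.cons_self_tail]
  exact B.aMem_comp_symm ρ hne hmem (by simp)

theorem connected_of_bracket_mem_V {i m k : I} {ct : Fin (n + 2) → Option I}
    {s s' : Fin (n + 2)} (hs : ct s = some m) (hm : B.Connected i m)
    (hsome : ∀ t, (ct t).isSome)
    (hne : ∃ z : Fin (n + 2) → L, (∀ t, z t ∈ B.elemSet (ct t)) ∧ A.bracket z ≠ 0)
    (hmem : ∀ z : Fin (n + 2) → L, (∀ t, z t ∈ B.elemSet (ct t)) → A.bracket z ∈ B.V)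
    (hs' : ct s' = some k) : B.Connected i k := by
  obtain rfl | hss' := eq_or_ne s' s
  · rwa [Option.some_injective _ (hs'.symm.trans hs)]
  obtain ⟨ρ, hρ0, hρ1⟩ := Fin.exists_perm_apply_zero_apply_one hss'
  -- `μ(m̄, (v, X'))` contains `k` when the products of type `(k, m, X')` lie in `V`
  have h0 : (ct ∘ ρ) 0 = some k := by simp [hρ0, hs']
  have h1 : Fin.tail (ct ∘ ρ) 0 = some m := by simp [Fin.tail, hρ1, hs]
  refine B.connected_of_muMem hm (q := Sum.inr m) (Or.inr rfl)
    (false, Fin.cons none (Fin.tail (Fin.tail (ct ∘ ρ)))) ⟨0, ρ.symm, ?_⟩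
  simp only [Fin.succAbove_zero, Fin.cons_succ, Fin.cons_zero]
  rw [← h1, Fin.cons_self_tail, ← h0, Fin.cons_self_tail]
  exact B.aMem_comp_symm ρ hne hmem fun _ => Or.inl hsome

def idealGens (i : I) : Set L :=
  {z | z ∈ B.V ∧ ∃ c : Fin (n + 2) → I,
    (∀ t, c t ∈ B.cls i) ∧ z = A.bracket (fun t => B.e (c t))} ∪ B.e '' B.cls i

theorem bracket_mem_span_idealGens {i m : I} {ct : Fin (n + 2) → Option I}
    {s : Fin (n + 2)} (hs : ct s = some m) (hm : m ∈ B.cls i) {z : Fin (n + 2) → L}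
    (hz : ∀ t, z t ∈ B.elemSet (ct t)) : A.bracket z ∈ span F (B.idealGens i) := by
  by_cases hz0 : A.bracket z = 0
  · rw [hz0]
    exact zero_mem _
  have hne : ∃ z : Fin (n + 2) → L, (∀ t, z t ∈ B.elemSet (ct t)) ∧ A.bracket z ≠ 0 :=
    ⟨z, hz, hz0⟩
  have of_line (p : I) (hp : ∀ z : Fin (n + 2) → L, (∀ t, z t ∈ B.elemSet (ct t)) →
      A.bracket z ∈ span F {B.e p}) : A.bracket z ∈ span F (B.idealGens i) := by
    have hp' : B.e p ∈ B.idealGens i :=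
      Or.inr ⟨p, B.connected_of_bracket_mem_span hs hm hne hp, rfl⟩
    exact span_mono (Set.singleton_subset_iff.mpr hp') (hp z hz)
  by_cases hsome : ∀ t, (ct t).isSome
  · obtain ⟨c, hc⟩ : ∃ c : Fin (n + 2) → I, ∀ t, ct t = some (c t) :=
      ⟨fun t => (ct t).get (hsome t), fun t => (Option.some_get _).symm⟩
    have hforce (z' : Fin (n + 2) → L) (hz' : ∀ t, z' t ∈ B.elemSet (ct t)) :
        z' = fun t => B.e (c t) :=
      funext fun t => by simpa [hc, elemSet] using hz' t
    obtain rfl := hforce z hz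
    rcases B.qm1 c with ⟨p, hp⟩ | hV
    · exact of_line p fun z' hz' => hforce z' hz' ▸ hp
    · refine subset_span (Or.inl ⟨hV, c, fun t => ?_, rfl⟩)
      exact B.connected_of_bracket_mem_V hs hm hsome hne
        (fun z' hz' => hforce z' hz' ▸ hV) (hc t)
  · obtain ⟨t₁, ht₁⟩ := not_forall.mp hsome
    let S := Finset.univ.filter fun t => (ct t).isSome
    have hS : S ≠ Finset.univ := fun h => ht₁ <| by
      simpa [S] using (h.symm ▸ Finset.mem_univ t₁ : t₁ ∈ S)
    obtain ⟨p, hp⟩ := B.qm2 1 S ⟨s, by simp [S, hs]⟩ hS fun t => (ct t).getD i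
    refine of_line p fun z' hz' => ?_
    have hbasis (t) (ht : t ∈ S) : z' t = B.e ((ct t).getD i) := by
      obtain ⟨k, hk⟩ := Option.isSome_iff_exists.mp (by simpa [S] using ht)
      simpa [hk, elemSet] using hz' t
    have hV (t) (ht : t ∉ S) : z' t ∈ B.V := by
      have hnone : ct t = none := by simpa [S] using ht
      simpa [hnone, elemSet] using hz' t
    simpa using hp z' hbasis hV

theorem bracket_update_mem_span_idealGens {i : I} {c : Fin (n + 2) → I}
    (hc : ∀ t, c t ∈ B.cls i) (r : Fin (n + 2)) {x : L} (hx : x ∈ span F (B.idealGens i)) :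
    A.bracket (update (fun t => B.e (c t)) r x) ∈ span F (B.idealGens i) := by
  obtain ⟨s, hs⟩ := exists_ne r
  induction hx using Submodule.span_induction with
  | mem x hx =>
    obtain ⟨o, ho⟩ : ∃ o, x ∈ B.elemSet o := by
      rcases hx with ⟨hxV, -⟩ | ⟨p, -, rfl⟩
      exacts [⟨none, hxV⟩, ⟨some p, rfl⟩]
    refine B.bracket_mem_span_idealGens (ct := update (fun t => some (c t)) r o)
      (s := s) (by simp [hs]) (hc s) fun t => ?_
    rcases eq_or_ne t r with rfl | ht
    · rwa [update_self, update_self]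
    · rw [update_of_ne ht, update_of_ne ht]
      rfl
  | zero => rw [A.bracket.map_update_zero]; exact zero_mem _
  | add x y _ _ hx hy => rw [A.bracket.map_update_add]; exact add_mem hx hy
  | smul a x _ hx => rw [A.bracket.map_update_smul]; exact smul_mem _ a hx

theorem bracket_insertNth_bracket_mem_span_idealGens {i : I} {c : Fin (n + 2) → I}
    (hc : ∀ t, c t ∈ B.cls i) (s : Fin (n + 2)) {y : Fin (n + 1) → L}
    {cy : Fin (n + 1) → Option I} {gy : Fin (n + 1) → G}
    (hy : ∀ u, y u ∈ B.elemSet (cy u)) (hgy : ∀ u, y u ∈ A.grading (gy u)) :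
    A.bracket (Fin.insertNth s (A.bracket fun t => B.e (c t)) y) ∈
      span F (B.idealGens i) := by
  rw [A.glt s (fun t => B.deg (c t)) gy _ y (fun t => B.e_homog (c t)) hgy]
  refine sum_mem fun r _ => sum_mem fun j _ => sum_mem fun σ₁ _ => sum_mem fun σ₂ _ =>
    smul_mem _ _ (B.bracket_update_mem_span_idealGens (fun t => hc (σ₁ t)) r ?_)
  refine B.bracket_mem_span_idealGens (ct := Fin.insertNth j (some (c (σ₁ r))) (cy ∘ σ₂))
    (s := j) (by simp) (hc (σ₁ r)) fun t => ?_
  refine Fin.succAboveCases j ?_ (fun u => ?_) t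
  · rw [Fin.insertNth_apply_same, Fin.insertNth_apply_same]
    rfl
  · rw [Fin.insertNth_apply_succAbove, Fin.insertNth_apply_succAbove]
    exact hy (σ₂ u)

theorem span_homogeneous_eq_top :
    span F {x : L | ∃ o g, x ∈ B.elemSet o ∧ x ∈ A.grading g} = ⊤ := by
  rw [eq_top_iff, ← B.compl.sup_eq_top, sup_le_iff]
  constructor
  · rw [B.V_graded]
    exact iSup_le fun g x hx => subset_span ⟨none, g, hx.1, hx.2⟩
  · rw [← B.e_span]
    exact span_mono (Set.range_subset_iff.mpr fun k => ⟨some k, B.deg k, rfl, B.e_homog k⟩)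

theorem bracket_mem_span_idealGens_of_mem {i : I} (s : Fin (n + 2)) {z : Fin (n + 2) → L}
    (hz : z s ∈ span F (B.idealGens i)) : A.bracket z ∈ span F (B.idealGens i) := by
  let H := {x : L | ∃ o g, x ∈ B.elemSet o ∧ x ∈ A.grading g}
  refine A.bracket.map_mem_of_forall_mem_span (S := update (fun _ => H) s (B.idealGens i))
    (fun w hw => ?_) fun t => ?_
  · have hy (u) : w (s.succAbove u) ∈ H := by
      simpa [Fin.succAbove_ne] using hw (s.succAbove u)
    choose cy gy hcy hgy using hy
    have hs : w s ∈ B.idealGens i := by simpa using hw s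
    rw [← Fin.insertNth_self_removeNth s w]
    rcases hs with ⟨-, c, hc, hwc⟩ | ⟨m, hm, hwm⟩
    · rw [hwc]
      exact B.bracket_insertNth_bracket_mem_span_idealGens hc s hcy hgy
    · refine B.bracket_mem_span_idealGens (ct := Fin.insertNth s (some m) cy) (s := s)
        (by simp) hm
        fun t => Fin.succAboveCases s ?_ (fun u => ?_) t
      · rw [Fin.insertNth_apply_same, Fin.insertNth_apply_same, ← hwm]
        rfl
      · rw [Fin.insertNth_apply_succAbove, Fin.insertNth_apply_succAbove]
        exact hcy u
  · rcases eq_or_ne t s with rfl | ht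
    · simpa using hz
    · rw [update_of_ne ht, B.span_homogeneous_eq_top]
      exact mem_top

theorem Jcls_eq_span_idealGens (i : I) : B.Jcls i = span F (B.idealGens i) := by
  apply le_antisymm
  · refine sup_le (inf_le_left.trans (span_le.mpr ?_)) (span_mono Set.subset_union_right)
    rintro _ ⟨c, hc, rfl⟩
    exact B.bracket_mem_span_idealGens (ct := fun t => some (c t)) (s := 0) rfl (hc 0)
      fun t => rfl
  · refine span_le.mpr (Set.union_subset ?_ fun x hx => mem_sup_right (subset_span hx))
    rintro _ ⟨hV, c, hc, rfl⟩
    exact mem_sup_left ⟨subset_span ⟨c, hc, rfl⟩, hV⟩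

theorem isIdeal_Jcls (i : I) : A.IsIdeal (B.Jcls i) := by
  rw [B.Jcls_eq_span_idealGens]
  refine ⟨span_eq_iSup_inf_of_forall_exists_mem A.grading fun x hx => ?_, fun σ x hx =>
    B.bracket_mem_span_idealGens_of_mem (σ.symm 0) (by simpa using hx)⟩
  rcases hx with ⟨-, c, -, rfl⟩ | ⟨m, -, rfl⟩
  exacts [⟨_, A.bracket_graded _ _ fun t => B.e_homog (c t)⟩, ⟨_, B.e_homog m⟩]

theorem mem_of_e_mem_sup_span {s : Set I} {j : I} (h : B.e j ∈ B.V ⊔ span F (B.e '' s)) :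
    j ∈ s := by
  obtain ⟨v, hv, w, hw, hvw⟩ := mem_sup.mp h
  have hwW : w ∈ B.W := B.e_span ▸ span_mono (Set.image_subset_range _ _) hw
  have hjW : B.e j ∈ B.W := B.e_span ▸ subset_span ⟨j, rfl⟩
  have hv0 : v = 0 := disjoint_def.mp B.compl.disjoint v hv
    (eq_sub_of_add_eq hvw ▸ sub_mem hjW hwW)
  by_contra hj
  exact B.e_indep.notMem_span_image hj (by rwa [← hvw, hv0, zero_add])

end QMBasis

theorem stmt6 {F : Type} [Field F] {G : Type} [AddCommGroup G] [DecidableEq G]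
    {L : Type} [AddCommGroup L] [Module F L] {n : ℕ} {I : Type}
    {A : ColorGLT F G L n} (B : QMBasis A I)
    (hsimple : ∀ S : Submodule F L, A.IsIdeal S → S = ⊥ ∨ S = ⊤) (i j : I) :
    B.Connected i j := by
  have hei : B.e i ∈ B.Jcls i := mem_sup_right (subset_span ⟨i, Or.inl rfl, rfl⟩)
  rcases hsimple _ (B.isIdeal_Jcls i) with hbot | htop
  · exact absurd ((mem_bot F).mp (hbot ▸ hei)) (B.e_indep.ne_zero i)
  · have hle : B.Jcls i ≤ B.V ⊔ B.Wcls i := sup_le_sup_right inf_le_right _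
    exact B.mem_of_e_mem_sup_span (hle (htop ▸ mem_top))
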